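/- Let d = 3 and suppose q = (q̄, q_n(q̄)) is a normalized central configuration, with q_i = (x_i, y_i, z_i). Then 0 = Σ_{i=1}^{n−1} m_i ( (y_i − y_n) DF^red_{i,z}(q̄) − (z_i − z_n) DF^red_{i,y}(q̄) ), an identity among the rows of the Jacobian matrix DF^red(q̄). -/

import Mathlib

open scoped BigOperators

noncomputable section

/-- Points in `ℝ^d`, with the Euclidean norm. -/
abbrev Pt (d : ℕ) := EuclideanSpace ℝ (Fin d)

/-- `F_i(q) = −q_i + Σ_{j ≠ i} m_j (q_j − q_i)/‖q_j − q_i‖³`. -/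
noncomputable def nbodyF {d n : ℕ} (m : Fin n → ℝ) (q : Fin n → Pt d) : Fin n → Pt d :=
  fun i => -q i + ∑ j ∈ Finset.univ.erase i, (m j / ‖q j - q i‖ ^ 3) • (q j - q i)

/-- A configuration is collision-free if all bodies occupy distinct positions. -/
def CollisionFree {d n : ℕ} (q : Fin n → Pt d) : Prop :=
  ∀ i j, i ≠ j → q i ≠ q j

/-- A normalized central configuration: collision-free, center of mass at the origin,
and `F(q) = 0`. -/
def IsNCC {d n : ℕ} (m : Fin n → ℝ) (q : Fin n → Pt d) : Prop :=
  CollisionFree q ∧ (∑ i, m i • q i) = 0 ∧ nbodyF m q = 0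

/-- Embedding of the reduced index set `{1,…,n−1}` into `{1,…,n}`. -/
def emb {n : ℕ} (i : Fin (n - 1)) : Fin n := Fin.castLE (Nat.sub_le n 1) i

/-- Extend a reduced configuration `q̄ = (q_1,…,q_{n−1})` by the position of the last body,
`q_n(q̄) = −(1/m_n) Σ_{i<n} m_i q_i`, computed from the center of mass condition. -/
noncomputable def extendConfig {d n : ℕ} (m : Fin n → ℝ) (qbar : Fin (n - 1) → Pt d) :
    Fin n → Pt d :=
  fun i => if h : (i : ℕ) < n - 1 then qbar ⟨i, h⟩
    else (-(1 / m i)) • ∑ j : Fin (n - 1), m (emb j) • qbar j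

/-- The center-of-mass reduced map `F^red_i(q̄) = F_i(q_1,…,q_{n−1},q_n(q̄))`, `i = 1,…,n−1`. -/
noncomputable def Fred {d n : ℕ} (m : Fin n → ℝ) (qbar : Fin (n - 1) → Pt d) :
    Fin (n - 1) → Pt d :=
  fun i => nbodyF m (extendConfig m qbar) (emb i)

/-- The Jacobian matrix of `F`, rows and columns indexed by (body, coordinate). -/
noncomputable def jacF {d n : ℕ} (m : Fin n → ℝ) (q : Fin n → Pt d) :
    Matrix (Fin n × Fin d) (Fin n × Fin d) ℝ :=
  fun p p' =>
    fderiv ℝ (fun q' : Fin n → Pt d => nbodyF m q' p.1 p.2) q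
      (Pi.single p'.1 (EuclideanSpace.single p'.2 (1 : ℝ)))

/-- The Jacobian matrix of `F^red`, rows and columns indexed by (body, coordinate). -/
noncomputable def jacFred {d n : ℕ} (m : Fin n → ℝ) (qbar : Fin (n - 1) → Pt d) :
    Matrix (Fin (n - 1) × Fin d) (Fin (n - 1) × Fin d) ℝ :=
  fun p p' =>
    fderiv ℝ (fun q' : Fin (n - 1) → Pt d => Fred m q' p.1 p.2) qbar
      (Pi.single p'.1 (EuclideanSpace.single p'.2 (1 : ℝ)))


section AuxLemmas

lemma pt_sum_apply {d : ℕ} {ι : Type*} (s : Finset ι) (v : ι → Pt d) (c : Fin d) :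
    (∑ j ∈ s, v j) c = ∑ j ∈ s, v j c := by
  have h := map_sum (EuclideanSpace.proj (𝕜 := ℝ) c) v s
  simp only [EuclideanSpace.proj, PiLp.proj_apply] at h
  exact h

lemma antisym_double_sum {n : ℕ} (f : Fin n → Fin n → ℝ) (hf : ∀ j k, f j k = - f k j) :
    ∑ k : Fin n, ∑ j ∈ Finset.univ.erase k, f k j = 0 := by
  have key : ∀ k : Fin n, ∑ j ∈ Finset.univ.erase k, f k j
      = ∑ j : Fin n, (if j = k then 0 else f k j) := by
    intro k
    rw [← Finset.sum_erase (Finset.univ) (a := k)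
      (f := fun j => if j = k then 0 else f k j) (by simp)]
    exact Finset.sum_congr rfl fun j hj => by simp [Finset.ne_of_mem_erase hj]
  simp only [key]
  have hswap : ∑ k : Fin n, ∑ j : Fin n, (if j = k then 0 else f k j)
      = - ∑ k : Fin n, ∑ j : Fin n, (if j = k then 0 else f k j) := by
    nth_rewrite 1 [Finset.sum_comm]
    rw [← Finset.sum_neg_distrib]
    refine Finset.sum_congr rfl fun j _ => ?_
    rw [← Finset.sum_neg_distrib]
    refine Finset.sum_congr rfl fun k _ => ?_
    by_cases h : j = k
    · subst h; simp
    · rw [if_neg h, if_neg (fun h' : k = j => h h'.symm)]; exact hf k j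
  linarith

lemma sum_emb_split {M : Type*} [AddCommGroup M] {n : ℕ} (hn : 1 ≤ n) (G : Fin n → M) :
    ∑ i : Fin (n-1), G (emb i) = (∑ k : Fin n, G k) - G ⟨n-1, Nat.sub_lt hn one_pos⟩ := by
  classical
  set f : ℕ → M := fun j => if h : j < n then G ⟨j, h⟩ else 0 with hf
  have h1 : ∑ k : Fin n, G k = ∑ j ∈ Finset.range n, f j := by
    rw [← Fin.sum_univ_eq_sum_range f n]
    exact Finset.sum_congr rfl fun k _ => by simp [hf, k.is_lt]
  have h2 : ∑ i : Fin (n-1), G (emb i) = ∑ j ∈ Finset.range (n-1), f j := by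
    rw [← Fin.sum_univ_eq_sum_range f (n-1)]
    refine Finset.sum_congr rfl fun i _ => ?_
    have hi : (i : ℕ) < n := lt_of_lt_of_le i.is_lt (Nat.sub_le n 1)
    simp only [hf, dif_pos hi]
    rfl
  have h3 : ∑ j ∈ Finset.range n, f j = ∑ j ∈ Finset.range (n-1), f j + f (n-1) := by
    conv_lhs => rw [← Nat.succ_pred_eq_of_pos hn]
    simp only [Nat.succ_eq_add_one, Nat.pred_eq_sub_one]
    rw [Finset.sum_range_succ]
  have h4 : f (n-1) = G ⟨n-1, Nat.sub_lt hn one_pos⟩ := by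
    simp only [hf, dif_pos (Nat.sub_lt hn one_pos)]
  rw [h1, h2, h3, h4]; abel

lemma H_zero {n : ℕ} (hn : 3 ≤ n) (m : Fin n → ℝ) (hm : ∀ i, 0 < m i)
    (q' : Fin (n-1) → Pt 3) :
    ∑ i : Fin (n-1), m (emb i) *
      ((q' i 1 - extendConfig m q' ⟨n-1, Nat.sub_lt (by omega) one_pos⟩ 1) * Fred m q' i 2 -
       (q' i 2 - extendConfig m q' ⟨n-1, Nat.sub_lt (by omega) one_pos⟩ 2) * Fred m q' i 1) = 0 := by
  have hn1 : 1 ≤ n := by omega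
  set N : Fin n := ⟨n-1, Nat.sub_lt hn1 one_pos⟩ with hN
  set q : Fin n → Pt 3 := extendConfig m q' with hqdef
  set F : Fin n → Pt 3 := nbodyF m q with hFdef
  have hq : ∀ i : Fin (n-1), q (emb i) = q' i := by
    intro i
    show (if h : ((emb i : Fin n) : ℕ) < n - 1 then q' ⟨(emb i : Fin n), h⟩ else _) = q' i
    rw [dif_pos (show ((emb i : Fin n) : ℕ) < n - 1 from i.is_lt)]
    exact congrArg q' (Fin.ext rfl)
  have hqN : q N = (-(1 / m N)) • ∑ j : Fin (n-1), m (emb j) • q' j := by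
    show (if h : (N : ℕ) < n - 1 then _ else (-(1 / m N)) • ∑ j : Fin (n-1), m (emb j) • q' j) = _
    rw [dif_neg (by simp [hN])]
  have hcom : ∀ c : Fin 3, ∑ k : Fin n, m k * q k c = 0 := by
    intro c
    have hs := sum_emb_split hn1 (fun k => m k * q k c)
    have hL : ∑ i : Fin (n-1), m (emb i) * q (emb i) c
        = ∑ i : Fin (n-1), m (emb i) * q' i c :=
      Finset.sum_congr rfl fun i _ => by rw [hq i]
    have hqNc : q N c = -(1 / m N) * ∑ j : Fin (n-1), m (emb j) * q' j c := by
      rw [hqN]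
      simp [pt_sum_apply]
    have hmN : m N ≠ 0 := ne_of_gt (hm N)
    rw [hL, hqNc] at hs
    have : (∑ k : Fin n, m k * q k c)
        = (∑ j : Fin (n-1), m (emb j) * q' j c)
          + m N * (-(1 / m N) * ∑ j : Fin (n-1), m (emb j) * q' j c) := by
      linarith [hs]
    rw [this]
    field_simp
    ring
  have hF : ∀ (k : Fin n) (c : Fin 3), F k c
      = -(q k c) + ∑ j ∈ Finset.univ.erase k, (m j / ‖q j - q k‖ ^ 3) * (q j c - q k c) := by
    intro k c
    show (nbodyF m q k) c = _
    rw [nbodyF]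
    simp [pt_sum_apply]
  have hFsum : ∀ c : Fin 3, ∑ k : Fin n, m k * F k c = 0 := by
    intro c
    have e1 : ∀ k : Fin n, m k * F k c
        = -(m k * q k c) + ∑ j ∈ Finset.univ.erase k,
            (m k * (m j / ‖q j - q k‖ ^ 3) * (q j c - q k c)) := by
      intro k
      rw [hF k c, mul_add, Finset.mul_sum]
      rw [mul_neg]
      congr 1
      exact Finset.sum_congr rfl fun j _ => by ring
    rw [Finset.sum_congr rfl fun k _ => e1 k, Finset.sum_add_distrib, Finset.sum_neg_distrib,
      hcom c, neg_zero, zero_add]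
    refine antisym_double_sum _ fun j k => ?_
    rw [norm_sub_rev]
    ring
  have hcross : ∑ k : Fin n, m k * (q k 1 * F k 2 - q k 2 * F k 1) = 0 := by
    have e2 : ∀ k : Fin n, m k * (q k 1 * F k 2 - q k 2 * F k 1)
        = ∑ j ∈ Finset.univ.erase k,
            (m k * (m j / ‖q j - q k‖ ^ 3) * (q k 1 * q j 2 - q k 2 * q j 1)) := by
      intro k
      rw [hF k 1, hF k 2]
      rw [show m k * (q k 1 * (-(q k 2) + ∑ j ∈ Finset.univ.erase k,
              (m j / ‖q j - q k‖ ^ 3) * (q j 2 - q k 2)) -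
            q k 2 * (-(q k 1) + ∑ j ∈ Finset.univ.erase k,
              (m j / ‖q j - q k‖ ^ 3) * (q j 1 - q k 1)))
          = (m k * q k 1) * (∑ j ∈ Finset.univ.erase k,
              (m j / ‖q j - q k‖ ^ 3) * (q j 2 - q k 2))
            - (m k * q k 2) * (∑ j ∈ Finset.univ.erase k,
              (m j / ‖q j - q k‖ ^ 3) * (q j 1 - q k 1)) from by ring,
        Finset.mul_sum, Finset.mul_sum, ← Finset.sum_sub_distrib]
      exact Finset.sum_congr rfl fun j _ => by ring
    rw [Finset.sum_congr rfl fun k _ => e2 k]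
    refine antisym_double_sum _ fun j k => ?_
    rw [norm_sub_rev]
    ring
  have hbig := sum_emb_split hn1
    (fun k => m k * ((q k 1 - q N 1) * F k 2 - (q k 2 - q N 2) * F k 1))
  have hLHS : ∑ i : Fin (n-1), m (emb i) *
      ((q' i 1 - q N 1) * Fred m q' i 2 - (q' i 2 - q N 2) * Fred m q' i 1)
      = ∑ i : Fin (n-1), m (emb i) *
        ((q (emb i) 1 - q N 1) * F (emb i) 2 - (q (emb i) 2 - q N 2) * F (emb i) 1) :=
    Finset.sum_congr rfl fun i _ => by rw [hq i]; rfl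
  have hRHS : ∑ k : Fin n, m k * ((q k 1 - q N 1) * F k 2 - (q k 2 - q N 2) * F k 1) = 0 := by
    have expand : ∀ k : Fin n, m k * ((q k 1 - q N 1) * F k 2 - (q k 2 - q N 2) * F k 1)
        = m k * (q k 1 * F k 2 - q k 2 * F k 1)
          - q N 1 * (m k * F k 2) + q N 2 * (m k * F k 1) := by
      intro k; ring
    rw [Finset.sum_congr rfl fun k _ => expand k, Finset.sum_add_distrib,
      Finset.sum_sub_distrib, ← Finset.mul_sum, ← Finset.mul_sum, hcross, hFsum 1, hFsum 2]
    ring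
  rw [hLHS]
  rw [hbig, hRHS]
  simp [← hN]

lemma extend_diff {d n : ℕ} (m : Fin n → ℝ) (k : Fin n) :
    Differentiable ℝ (fun q' : Fin (n-1) → Pt d => extendConfig m q' k) := by
  unfold extendConfig
  by_cases h : (k : ℕ) < n - 1
  · simp only [dif_pos h]
    exact (ContinuousLinearMap.proj (R := ℝ)
      (φ := fun _ : Fin (n-1) => Pt d) ⟨k, h⟩).differentiable
  · simp only [dif_neg h]
    refine Differentiable.fun_const_smul ?_ _
    refine Differentiable.fun_sum fun j _ => ?_
    exact ((ContinuousLinearMap.proj (R := ℝ)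
      (φ := fun _ : Fin (n-1) => Pt d) j).differentiable).fun_const_smul _

lemma extend_coord_diff {n : ℕ} (m : Fin n → ℝ) (k : Fin n) (a : Fin 3) :
    Differentiable ℝ (fun q' : Fin (n-1) → Pt 3 => extendConfig m q' k a) := by
  have h := ((EuclideanSpace.proj (𝕜 := ℝ) a).differentiable).comp (extend_diff m k)
  simpa [Function.comp, EuclideanSpace.proj, Function.comp_def] using h

lemma coord_diff {n : ℕ} (i : Fin (n-1)) (a : Fin 3) :
    Differentiable ℝ (fun q' : Fin (n-1) → Pt 3 => q' i a) := by
  have h := ((EuclideanSpace.proj (𝕜 := ℝ) a).differentiable).comp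
    ((ContinuousLinearMap.proj (R := ℝ) (φ := fun _ : Fin (n-1) => Pt 3) i).differentiable)
  simpa [Function.comp, EuclideanSpace.proj, Function.comp_def] using h

lemma fred_comp_diff {n : ℕ} (m : Fin n → ℝ) (qbar : Fin (n-1) → Pt 3)
    (hcf : CollisionFree (extendConfig m qbar)) (i : Fin (n-1)) (c : Fin 3) :
    DifferentiableAt ℝ (fun q' : Fin (n-1) → Pt 3 => Fred m q' i c) qbar := by
  have hFred : DifferentiableAt ℝ (fun q' : Fin (n-1) → Pt 3 => Fred m q' i) qbar := by
    unfold Fred nbodyF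
    refine DifferentiableAt.add ?_ ?_
    · exact ((extend_diff m (emb i)) qbar).neg
    · refine DifferentiableAt.fun_sum fun j hj => ?_
      have hne : extendConfig m qbar j ≠ extendConfig m qbar (emb i) :=
        hcf j (emb i) (Finset.ne_of_mem_erase hj)
      have hu : DifferentiableAt ℝ
          (fun q' : Fin (n-1) → Pt 3 =>
            extendConfig m q' j - extendConfig m q' (emb i)) qbar :=
        ((extend_diff m j) qbar).sub ((extend_diff m (emb i)) qbar)
      have hu0 : extendConfig m qbar j - extendConfig m qbar (emb i) ≠ 0 := sub_ne_zero.mpr hne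
      have hnorm : DifferentiableAt ℝ
          (fun q' : Fin (n-1) → Pt 3 =>
            ‖extendConfig m q' j - extendConfig m q' (emb i)‖) qbar :=
        hu.norm ℝ hu0
      have hden : DifferentiableAt ℝ
          (fun q' : Fin (n-1) → Pt 3 =>
            m j / ‖extendConfig m q' j - extendConfig m q' (emb i)‖ ^ 3) qbar := by
        simp only [div_eq_mul_inv]
        exact ((hnorm.pow 3).inv (pow_ne_zero 3 (norm_ne_zero_iff.mpr hu0))).const_mul (m j)
      exact hden.smul hu
  have hproj := (EuclideanSpace.proj (𝕜 := ℝ) (c : Fin 3)).differentiableAt.comp qbar hFred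
  simpa [Function.comp, EuclideanSpace.proj, Function.comp_def] using hproj

end AuxLemmas

/-- `0 = Σ_i m_i ((y_i − y_n) DF^red_{i,z} − (z_i − z_n) DF^red_{i,y})`
as an identity among the rows of `DF^red(q̄)` (here `y = 1`, `z = 2`). -/
theorem stmt2 {n : ℕ} (hn : 3 ≤ n) (m : Fin n → ℝ) (hm : ∀ i, 0 < m i)
    (qbar : Fin (n - 1) → Pt 3) (hcc : IsNCC m (extendConfig m qbar)) :
    ∀ p : Fin (n - 1) × Fin 3,
      ∑ i : Fin (n - 1), m (emb i) *
        ((qbar i 1 - extendConfig m qbar ⟨n - 1, by omega⟩ 1) * jacFred m qbar (i, 2) p -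
          (qbar i 2 - extendConfig m qbar ⟨n - 1, by omega⟩ 2) * jacFred m qbar (i, 1) p) = 0 := by
  intro p
  obtain ⟨hcf, _hcom, hF0⟩ := hcc
  have hn1 : 1 ≤ n := by omega
  set N : Fin n := ⟨n-1, Nat.sub_lt hn1 one_pos⟩ with hNdef
  set v : Fin (n-1) → Pt 3 := Pi.single p.1 (EuclideanSpace.single p.2 (1 : ℝ)) with hvdef
  -- value of Fred at qbar is zero
  have hFv : ∀ (i : Fin (n-1)) (c : Fin 3), Fred m qbar i c = 0 := by
    intro i c
    have : Fred m qbar i = (0 : Fin n → Pt 3) (emb i) := by rw [Fred, hF0]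
    rw [this]
    simp
  -- derivatives
  set Dφ : Fin (n-1) → Fin 3 → ((Fin (n-1) → Pt 3) →L[ℝ] ℝ) :=
    fun i c => fderiv ℝ (fun q' : Fin (n-1) → Pt 3 => Fred m q' i c) qbar with hDφ
  have hφ : ∀ (i : Fin (n-1)) (c : Fin 3),
      HasFDerivAt (fun q' : Fin (n-1) → Pt 3 => Fred m q' i c) (Dφ i c) qbar :=
    fun i c => (fred_comp_diff m qbar hcf i c).hasFDerivAt
  set Eψ : Fin (n-1) → Fin 3 → ((Fin (n-1) → Pt 3) →L[ℝ] ℝ) :=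
    fun i a => fderiv ℝ
      (fun q' : Fin (n-1) → Pt 3 => q' i a - extendConfig m q' N a) qbar with hEψ
  have hψ : ∀ (i : Fin (n-1)) (a : Fin 3),
      HasFDerivAt (fun q' : Fin (n-1) → Pt 3 => q' i a - extendConfig m q' N a)
        (Eψ i a) qbar :=
    fun i a => (((coord_diff i a) qbar).sub ((extend_coord_diff m N a) qbar)).hasFDerivAt
  -- the function G is identically zero
  set G : (Fin (n-1) → Pt 3) → ℝ := fun q' => ∑ i : Fin (n-1), m (emb i) *
      ((q' i 1 - extendConfig m q' N 1) * Fred m q' i 2 -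
       (q' i 2 - extendConfig m q' N 2) * Fred m q' i 1) with hGdef
  have hterm : ∀ i : Fin (n-1), HasFDerivAt
      (fun q' : Fin (n-1) → Pt 3 => m (emb i) *
        ((q' i 1 - extendConfig m q' N 1) * Fred m q' i 2 -
         (q' i 2 - extendConfig m q' N 2) * Fred m q' i 1))
      (m (emb i) •
        (((qbar i 1 - extendConfig m qbar N 1) • Dφ i 2 + Fred m qbar i 2 • Eψ i 1) -
         ((qbar i 2 - extendConfig m qbar N 2) • Dφ i 1 + Fred m qbar i 1 • Eψ i 2))) qbar :=
    fun i => ((((hψ i 1).mul (hφ i 2)).sub ((hψ i 2).mul (hφ i 1))).const_mul _)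
  have hG : HasFDerivAt G
      (∑ i : Fin (n-1), m (emb i) •
        (((qbar i 1 - extendConfig m qbar N 1) • Dφ i 2 + Fred m qbar i 2 • Eψ i 1) -
         ((qbar i 2 - extendConfig m qbar N 2) • Dφ i 1 + Fred m qbar i 1 • Eψ i 2))) qbar :=
    HasFDerivAt.fun_sum fun i _ => hterm i
  have hGzero : G = fun _ => (0 : ℝ) := funext fun q' => H_zero hn m hm q'
  have hG0 : HasFDerivAt G (0 : (Fin (n-1) → Pt 3) →L[ℝ] ℝ) qbar := by
    rw [hGzero]
    exact hasFDerivAt_const 0 qbar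
  have heq := hG.unique hG0
  have hv0 : (∑ i : Fin (n-1), m (emb i) •
        (((qbar i 1 - extendConfig m qbar N 1) • Dφ i 2 + Fred m qbar i 2 • Eψ i 1) -
         ((qbar i 2 - extendConfig m qbar N 2) • Dφ i 1 + Fred m qbar i 1 • Eψ i 2))) v
      = 0 := by rw [heq]; rfl
  simp only [ContinuousLinearMap.sum_apply, ContinuousLinearMap.smul_apply,
    ContinuousLinearMap.add_apply, ContinuousLinearMap.sub_apply, hFv, zero_smul,
    smul_eq_mul, add_zero] at hv0
  -- identify with the goal
  simp only [jacFred]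
  exact hv0
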